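/- arXiv:2003.12423 — 2 statements merged into one kernel-verified Lean document; each statement's English description precedes it below -/
import Mathlib

section
/- Let f : ℝ^d → ℝ be differentiable with L-Lipschitz gradient, and let f_μ(x) = E_{u ~ Uniform(unit ball)}[f(x + μu)]. Then ‖∇f_μ(x) - ∇f(x)‖ ≤ μLd/2 for all x. -/
/-!
Differentiating under the integral sign, `∇f_μ(x) = ⨍_{u ∈ B} ∇f(x + μu) du`, so the
Lipschitz bound on `∇f` gives `‖∇f_μ(x) - ∇f(x)‖ ≤ μL ⨍_{u ∈ B} ‖u‖ du`. In polar coordinates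
the mean norm over the unit ball of a `d`-dimensional space is `d ∫₀¹ rᵈ dr = d / (d + 1)`,
which is at most `d / 2` once `d ≥ 1`.
-/

open MeasureTheory Metric Module

theorem norm_gradient_sub_gradient {E : Type*} [NormedAddCommGroup E] [InnerProductSpace ℝ E]
    [CompleteSpace E] (f g : E → ℝ) (x y : E) :
    ‖gradient f x - gradient g y‖ = ‖fderiv ℝ f x - fderiv ℝ g y‖ := by
  rw [gradient, gradient, ← map_sub, LinearIsometryEquiv.norm_map]

theorem norm_setAverage_sub_le {α F : Type*} [MeasurableSpace α] [NormedAddCommGroup F]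
    [NormedSpace ℝ F] [CompleteSpace F] {μ : Measure α} {s : Set α} (hs : MeasurableSet s)
    (hμs₀ : μ s ≠ 0) (hμs : μ s ≠ ⊤) {g : α → F} {φ : α → ℝ} (hg : IntegrableOn g s μ)
    (hφ : IntegrableOn φ s μ) (a : F) (hgφ : ∀ u ∈ s, ‖g u - a‖ ≤ φ u) :
    ‖(⨍ u in s, g u ∂μ) - a‖ ≤ ⨍ u in s, φ u ∂μ := by
  have hμs_real : μ.real s ≠ 0 := (ENNReal.toReal_pos hμs₀ hμs).ne'
  have hsub : (⨍ u in s, g u ∂μ) - a = ⨍ u in s, (g u - a) ∂μ := by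
    rw [setAverage_eq, setAverage_eq, integral_sub hg (integrableOn_const hμs), setIntegral_const,
      smul_sub, smul_smul, inv_mul_cancel₀ hμs_real, one_smul]
  rw [hsub, setAverage_eq, setAverage_eq, norm_smul, Real.norm_of_nonneg (by positivity),
    smul_eq_mul]
  gcongr
  exact norm_integral_le_of_norm_le hφ (ae_restrict_of_forall_mem hs hgφ)

section Smoothing

variable {E F : Type*} [NormedAddCommGroup E] [NormedSpace ℝ E] [MeasurableSpace E]
  [BorelSpace E] [NormedAddCommGroup F] [NormedSpace ℝ F]

theorem hasFDerivAt_integral_comp_add_smul [SecondCountableTopology E] (μ : Measure E)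
    [IsFiniteMeasureOnCompacts μ] {s : Set E} (hs : IsCompact s) (c : ℝ) {f : E → F}
    {K : NNReal} (hf : Differentiable ℝ f) (hf' : LipschitzWith K (fderiv ℝ f)) (x : E) :
    HasFDerivAt (fun z => ∫ u in s, f (z + c • u) ∂μ) (∫ u in s, fderiv ℝ f (x + c • u) ∂μ) x := by
  obtain ⟨R, hsR⟩ := hs.isBounded.subset_closedBall 0
  have hshift : Continuous fun u : E => x + c • u := by fun_prop
  refine hasFDerivAt_integral_of_dominated_of_fderiv_le
    (F' := fun z u => fderiv ℝ f (z + c • u)) (ball_mem_nhds x one_pos)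
    (bound := fun _ => ‖fderiv ℝ f x‖ + K * (1 + |c| * R))
    (Filter.Eventually.of_forall fun z => (hf.continuous.comp (by fun_prop)).aestronglyMeasurable)
    ((hf.continuous.comp hshift).continuousOn.integrableOn_compact hs)
    (hf'.continuous.comp hshift).aestronglyMeasurable ?_ (integrableOn_const hs.measure_lt_top.ne)
    (Filter.Eventually.of_forall fun u z _ => ?_)
  · filter_upwards [ae_restrict_mem hs.measurableSet] with u hu z hz
    have hdist : ‖z + c • u - x‖ ≤ 1 + |c| * R := by
      calc ‖z + c • u - x‖ = ‖(z - x) + c • u‖ := by congr 1; abel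
        _ ≤ ‖z - x‖ + |c| * ‖u‖ := by rw [← Real.norm_eq_abs, ← norm_smul]; exact norm_add_le _ _
        _ ≤ 1 + |c| * R := by
          gcongr
          · exact (mem_ball_iff_norm.1 hz).le
          · exact mem_closedBall_zero_iff.1 (hsR hu)
    calc ‖fderiv ℝ f (z + c • u)‖
        ≤ ‖fderiv ℝ f x‖ + ‖fderiv ℝ f (z + c • u) - fderiv ℝ f x‖ := norm_le_insert' _ _
      _ ≤ ‖fderiv ℝ f x‖ + K * (1 + |c| * R) := by
        gcongr
        exact (hf'.norm_sub_le _ _).trans (by gcongr)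
  · exact (hf _).hasFDerivAt.comp z ((hasFDerivAt_id z).add_const _)

theorem hasFDerivAt_setAverage_comp_add_smul [SecondCountableTopology E] (μ : Measure E)
    [IsFiniteMeasureOnCompacts μ] {s : Set E} (hs : IsCompact s) (c : ℝ) {f : E → F}
    {K : NNReal} (hf : Differentiable ℝ f) (hf' : LipschitzWith K (fderiv ℝ f)) (x : E) :
    HasFDerivAt (fun z => ⨍ u in s, f (z + c • u) ∂μ) (⨍ u in s, fderiv ℝ f (x + c • u) ∂μ) x := by
  simp only [setAverage_eq]
  exact (hasFDerivAt_integral_comp_add_smul μ hs c hf hf' x).const_smul _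

variable [FiniteDimensional ℝ E] [Nontrivial E] (μ : Measure E) [μ.IsAddHaarMeasure]

theorem integral_norm_closedBall_zero_one :
    ∫ x in closedBall (0 : E) 1, ‖x‖ ∂μ = finrank ℝ E / (finrank ℝ E + 1) * μ.real (ball 0 1) := by
  obtain ⟨n, hn⟩ := Nat.exists_eq_add_one_of_ne_zero (finrank_pos (R := ℝ) (M := E)).ne'
  have hind : ∫ x in closedBall (0 : E) 1, ‖x‖ ∂μ = ∫ x, (Set.Iic 1).indicator id ‖x‖ ∂μ := by
    rw [← integral_indicator measurableSet_closedBall]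
    congr 1 with x
    simp [Set.indicator]
  have hradial : ∫ y in Set.Ioi (0 : ℝ), y ^ n • (Set.Iic 1).indicator id y = 1 / (n + 2) := by
    calc ∫ y in Set.Ioi (0 : ℝ), y ^ n • (Set.Iic 1).indicator id y
        = ∫ y in Set.Ioc (0 : ℝ) 1, y ^ (n + 1) := by
          rw [← Set.Ioi_inter_Iic, ← integral_indicator measurableSet_Ioi,
            ← integral_indicator (measurableSet_Ioi.inter measurableSet_Iic)]
          congr 1 with y
          by_cases h0 : 0 < y <;> by_cases h1 : y ≤ 1 <;> simp [Set.indicator, h0, h1, pow_succ]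
      _ = 1 / (n + 2) := by
          rw [← intervalIntegral.integral_of_le zero_le_one, integral_pow]
          norm_num
          ring
  rw [hind, integral_fun_norm_addHaar μ, hn, Nat.add_sub_cancel, hradial]
  simp only [nsmul_eq_mul, smul_eq_mul]
  push_cast
  field_simp
  ring

theorem setAverage_norm_closedBall_zero_one :
    ⨍ x in closedBall (0 : E) 1, ‖x‖ ∂μ = finrank ℝ E / (finrank ℝ E + 1) := by
  have hball : μ.real (ball (0 : E) 1) ≠ 0 :=
    (ENNReal.toReal_pos (measure_ball_pos μ 0 one_pos).ne' measure_ball_lt_top.ne).ne'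
  rw [setAverage_eq, integral_norm_closedBall_zero_one,
    Measure.addHaar_real_closedBall_eq_addHaar_real_ball, smul_eq_mul]
  field_simp

theorem norm_fderiv_setAverage_closedBall_sub_le [CompleteSpace F] {f : E → F} {K : NNReal}
    (hf : Differentiable ℝ f) (hf' : LipschitzWith K (fderiv ℝ f)) (c : ℝ) (x : E) :
    ‖fderiv ℝ (fun z => ⨍ u in closedBall (0 : E) 1, f (z + c • u) ∂μ) x - fderiv ℝ f x‖
      ≤ K * |c| * (finrank ℝ E / (finrank ℝ E + 1)) := by
  have hB : IsCompact (closedBall (0 : E) 1) := isCompact_closedBall 0 1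
  rw [(hasFDerivAt_setAverage_comp_add_smul μ hB c hf hf' x).fderiv,
    ← setAverage_norm_closedBall_zero_one μ]
  calc ‖(⨍ u in closedBall (0 : E) 1, fderiv ℝ f (x + c • u) ∂μ) - fderiv ℝ f x‖
      ≤ ⨍ u in closedBall (0 : E) 1, K * |c| * ‖u‖ ∂μ := by
        refine norm_setAverage_sub_le measurableSet_closedBall
          (measure_closedBall_pos μ 0 one_pos).ne' hB.measure_lt_top.ne
          ((hf'.continuous.comp (by fun_prop)).continuousOn.integrableOn_compact hB)
          ((by fun_prop : Continuous fun u : E => K * |c| * ‖u‖).continuousOn.integrableOn_compact hB)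
          _ fun u _ => ?_
        calc ‖fderiv ℝ f (x + c • u) - fderiv ℝ f x‖ ≤ K * ‖x + c • u - x‖ := hf'.norm_sub_le _ _
          _ = K * |c| * ‖u‖ := by rw [add_sub_cancel_left, norm_smul, Real.norm_eq_abs, mul_assoc]
    _ = K * |c| * ⨍ u in closedBall (0 : E) 1, ‖u‖ ∂μ := by
        simp only [setAverage_eq, smul_eq_mul, integral_const_mul]
        ring

end Smoothing

theorem smoothing_gradient_approx (d : ℕ) (f : EuclideanSpace ℝ (Fin d) → ℝ) (L μ : ℝ)
    (hμ : 0 < μ)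
    (hdiff : Differentiable ℝ f)
    (hlip : ∀ x y, ‖gradient f x - gradient f y‖ ≤ L * ‖x - y‖) :
    ∀ x : EuclideanSpace ℝ (Fin d),
      ‖gradient (fun z => ⨍ u in closedBall (0 : EuclideanSpace ℝ (Fin d)) 1, f (z + μ • u)) x
          - gradient f x‖ ≤ μ * L * d / 2 := by
  intro x
  obtain rfl | hd := Nat.eq_zero_or_pos d
  · simp [Subsingleton.elim (_ : EuclideanSpace ℝ (Fin 0)) 0]
  have : Nontrivial (EuclideanSpace ℝ (Fin d)) := finrank_pos_iff (R := ℝ).1 (by simpa using hd)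
  have hL : 0 ≤ L := by
    obtain ⟨y, hy⟩ := exists_ne (0 : EuclideanSpace ℝ (Fin d))
    have hy_lip := (norm_nonneg _).trans (hlip y 0)
    rw [sub_zero] at hy_lip
    exact nonneg_of_mul_nonneg_left hy_lip (norm_pos_iff.2 hy)
  have hf' : LipschitzWith L.toNNReal (fderiv ℝ f) := LipschitzWith.of_dist_le' fun a b => by
    simpa only [dist_eq_norm, norm_gradient_sub_gradient] using hlip a b
  rw [norm_gradient_sub_gradient]
  calc _ ≤ L * μ * (d / (d + 1)) := by
        simpa [Real.coe_toNNReal L hL, abs_of_pos hμ] using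
          norm_fderiv_setAverage_closedBall_sub_le volume hdiff hf' μ x
    _ ≤ μ * L * (d / 2) := by
        rw [mul_comm L]
        gcongr
        norm_cast
        omega
    _ = μ * L * d / 2 := by ring
end

section
/- Let F : ℝ^d → ℝ be differentiable with L-Lipschitz gradient, let v be uniformly distributed on the unit sphere in ℝ^d, and define the zeroth-order gradient estimate G_μ = (d/μ)[F(x + μv) - F(x)]v for μ > 0. Then E_v[‖G_μ‖²] ≤ 2d‖∇F(x)‖² + μ²L²d²/2. -/
open MeasureTheory Metric

/-- The uniform probability measure on the closed unit ball of `ℝ^d`. -/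
noncomputable def ballUniform (d : ℕ) : Measure (EuclideanSpace ℝ (Fin d)) :=
  (volume (closedBall (0 : EuclideanSpace ℝ (Fin d)) 1))⁻¹ •
    volume.restrict (closedBall (0 : EuclideanSpace ℝ (Fin d)) 1)

/-- The uniform probability measure on the unit sphere of `ℝ^d`, obtained by
radially projecting the uniform measure on the unit ball. -/
noncomputable def sphereUniform (d : ℕ) : Measure (EuclideanSpace ℝ (Fin d)) :=
  Measure.map (fun u => ‖u‖⁻¹ • u) (ballUniform d)

/-!
The descent lemma for an `L`-smooth `F` gives `|F (x + μ v) - F x - μ ⟪∇F x, v⟫| ≤ L μ² / 2` on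
the unit sphere, so `(a + b)² ≤ 2 a² + 2 b²` bounds the squared estimate pointwise by
`2 d² ⟪∇F x, v⟫² + d² L² μ² / 2`. The uniform measure on the sphere is invariant under the
reflection exchanging any two unit vectors, so `∫ ⟪u, v⟫²` is the same for every unit `u`;
summing over an orthonormal basis shows that this common value is `1 / d`.
-/

open scoped RealInnerProductSpace

theorem abs_sub_sub_inner_gradient_le {E : Type*} [NormedAddCommGroup E] [InnerProductSpace ℝ E]
    [CompleteSpace E] {F : E → ℝ} {L : ℝ} (hF : Differentiable ℝ F) (p : E)
    (hL : ∀ y, ‖gradient F y - gradient F p‖ ≤ L * ‖y - p‖) (q : E) :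
    |F q - F p - ⟪gradient F p, q - p⟫| ≤ L / 2 * ‖q - p‖ ^ 2 := by
  set w := q - p
  let φ : ℝ → ℝ := fun t => F (p + t • w) - F p - t * ⟪gradient F p, w⟫
  have hφ : ∀ t, HasDerivAt φ ⟪gradient F (p + t • w) - gradient F p, w⟫ t := by
    intro t
    have hline : HasDerivAt (fun t : ℝ => p + t • w) w t := by
      simpa using ((hasDerivAt_id t).smul_const w).const_add p
    have hFline := (hF (p + t • w)).hasGradientAt.hasFDerivAt.comp_hasDerivAt t hline
    rw [inner_sub_left]
    exact (hFline.sub_const _).sub (by simpa using hasDerivAt_mul_const ⟪gradient F p, w⟫)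
  have hbound : ∀ t ∈ Set.Ico (0 : ℝ) 1,
      ‖⟪gradient F (p + t • w) - gradient F p, w⟫‖ ≤ L * ‖w‖ ^ 2 * t := by
    intro t ht
    calc ‖⟪gradient F (p + t • w) - gradient F p, w⟫‖
        ≤ ‖gradient F (p + t • w) - gradient F p‖ * ‖w‖ := norm_inner_le_norm _ _
      _ ≤ L * ‖t • w‖ * ‖w‖ := by
          gcongr
          simpa using hL (p + t • w)
      _ = L * ‖w‖ ^ 2 * t := by rw [norm_smul, Real.norm_of_nonneg ht.1]; ring
  have hB : ∀ t : ℝ, HasDerivAt (fun t => L / 2 * ‖w‖ ^ 2 * t ^ 2) (L * ‖w‖ ^ 2 * t) t := by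
    intro t
    refine ((hasDerivAt_pow 2 t).const_mul (L / 2 * ‖w‖ ^ 2)).congr_deriv ?_
    push_cast
    ring
  have key := image_norm_le_of_norm_deriv_right_le_deriv_boundary (a := 0) (b := 1) (f := φ)
    (fun t _ => (hφ t).continuousAt.continuousWithinAt) (fun t _ => (hφ t).hasDerivWithinAt)
    (by simp [φ]) hB hbound (Set.right_mem_Icc.2 zero_le_one)
  simpa [φ, w] using key

section IsometryInvariant

variable {E : Type*} [NormedAddCommGroup E] [InnerProductSpace ℝ E] [MeasurableSpace E]
  [BorelSpace E] {ν : Measure E}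

theorem integrable_inner_sq [IsFiniteMeasure ν] (hν : ∀ᵐ v ∂ν, ‖v‖ = 1) (g : E) :
    Integrable (fun v => ⟪g, v⟫ ^ 2) ν := by
  refine Integrable.mono' (integrable_const (‖g‖ ^ 2))
    ((continuous_const.inner continuous_id).pow 2).aestronglyMeasurable ?_
  filter_upwards [hν] with v hv
  rw [Real.norm_eq_abs, abs_pow]
  simpa [hv] using pow_le_pow_left₀ (abs_nonneg _) (abs_real_inner_le_norm g v) 2

theorem integral_inner_sq_eq_of_norm_eq (hν : ∀ e : E ≃ₗᵢ[ℝ] E, ν.map e = ν) {a b : E}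
    (hab : ‖a‖ = ‖b‖) : ∫ v, ⟪a, v⟫ ^ 2 ∂ν = ∫ v, ⟪b, v⟫ ^ 2 ∂ν := by
  set R := (ℝ ∙ (a - b))ᗮ.reflection
  have hR : ∀ v, ⟪b, v⟫ = ⟪a, R v⟫ := fun v => by
    rw [← Submodule.reflection_sub hab, ← R.inner_map_map a (R v), Submodule.reflection_reflection]
  have hRν : MeasurePreserving R ν ν := ⟨R.continuous.measurable, hν R⟩
  simp_rw [hR]
  exact (hRν.integral_comp R.toHomeomorph.measurableEmbedding _).symm

variable [FiniteDimensional ℝ E] [IsProbabilityMeasure ν]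

theorem integral_inner_sq_of_norm_eq_one (hν : ∀ e : E ≃ₗᵢ[ℝ] E, ν.map e = ν)
    (hν₁ : ∀ᵐ v ∂ν, ‖v‖ = 1) {u : E} (hu : ‖u‖ = 1) :
    ∫ v, ⟪u, v⟫ ^ 2 ∂ν = 1 / Module.finrank ℝ E := by
  let b := stdOrthonormalBasis ℝ E
  have hsum : ∑ i, ∫ v, ⟪b i, v⟫ ^ 2 ∂ν = 1 := by
    rw [← integral_finsetSum _ fun i _ => integrable_inner_sq hν₁ (b i)]
    simp_rw [b.sum_sq_inner_right]
    rw [integral_congr_ae (g := fun _ => (1 : ℝ)) (hν₁.mono fun v hv => by simp [hv]),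
      integral_const]
    simp
  have hb : ∀ i, ∫ v, ⟪b i, v⟫ ^ 2 ∂ν = ∫ v, ⟪u, v⟫ ^ 2 ∂ν := fun i =>
    integral_inner_sq_eq_of_norm_eq hν (by rw [b.orthonormal.1 i, hu])
  simp only [hb, Finset.sum_const, Finset.card_univ, Fintype.card_fin, nsmul_eq_mul] at hsum
  rw [eq_div_iff_mul_eq (left_ne_zero_of_mul_eq_one hsum), mul_comm, hsum]

theorem integral_inner_sq_of_isometry_invariant (hν : ∀ e : E ≃ₗᵢ[ℝ] E, ν.map e = ν)
    (hν₁ : ∀ᵐ v ∂ν, ‖v‖ = 1) (g : E) :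
    ∫ v, ⟪g, v⟫ ^ 2 ∂ν = ‖g‖ ^ 2 / Module.finrank ℝ E := by
  rcases eq_or_ne g 0 with rfl | hg
  · simp
  have hu : ‖‖g‖⁻¹ • g‖ = 1 := norm_smul_inv_norm hg
  have hg_eq : g = ‖g‖ • ‖g‖⁻¹ • g := by rw [smul_inv_smul₀ (norm_ne_zero_iff.2 hg)]
  conv_lhs => rw [hg_eq]
  simp_rw [real_inner_smul_left _ _ ‖g‖, mul_pow]
  rw [integral_const_mul, integral_inner_sq_of_norm_eq_one hν hν₁ hu]
  ring

end IsometryInvariant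

section SphereUniform

variable {d : ℕ}

theorem measurable_inv_norm_smul : Measurable fun u : EuclideanSpace ℝ (Fin d) => ‖u‖⁻¹ • u :=
  measurable_norm.inv.smul measurable_id

theorem ballUniform_map_linearIsometryEquiv
    (e : EuclideanSpace ℝ (Fin d) ≃ₗᵢ[ℝ] EuclideanSpace ℝ (Fin d)) :
    (ballUniform d).map e = ballUniform d := by
  have hB : e ⁻¹' closedBall 0 1 = closedBall 0 1 := by
    ext u
    simp
  rw [ballUniform, Measure.map_smul, ← hB,
    (e.measurePreserving.restrict_preimage measurableSet_closedBall).map_eq, hB]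

theorem sphereUniform_map_linearIsometryEquiv
    (e : EuclideanSpace ℝ (Fin d) ≃ₗᵢ[ℝ] EuclideanSpace ℝ (Fin d)) :
    (sphereUniform d).map e = sphereUniform d := by
  have hcomm : e ∘ (fun u => ‖u‖⁻¹ • u) = (fun u => ‖u‖⁻¹ • u) ∘ e := by
    funext u
    simp
  rw [sphereUniform, Measure.map_map e.continuous.measurable measurable_inv_norm_smul, hcomm,
    ← Measure.map_map measurable_inv_norm_smul e.continuous.measurable,
    ballUniform_map_linearIsometryEquiv]

variable [NeZero d]

instance : IsProbabilityMeasure (ballUniform d) := by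
  constructor
  rw [ballUniform, Measure.smul_apply, Measure.restrict_apply_univ, smul_eq_mul,
    ENNReal.inv_mul_cancel (measure_closedBall_pos volume 0 one_pos).ne'
      measure_closedBall_lt_top.ne]

instance : IsProbabilityMeasure (sphereUniform d) :=
  Measure.isProbabilityMeasure_map measurable_inv_norm_smul.aemeasurable

theorem ae_norm_eq_one_sphereUniform : ∀ᵐ v ∂(sphereUniform d), ‖v‖ = 1 := by
  rw [sphereUniform, ae_map_iff measurable_inv_norm_smul.aemeasurable
    (measurableSet_eq_fun measurable_norm measurable_const)]
  have hne : ∀ᵐ u ∂(ballUniform d), u ≠ 0 :=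
    Measure.ae_smul_measure (ae_restrict_of_ae (Measure.ae_ne volume 0)) _
  filter_upwards [hne] with u hu
  exact norm_smul_inv_norm hu

theorem integral_inner_sq_sphereUniform (g : EuclideanSpace ℝ (Fin d)) :
    ∫ v, ⟪g, v⟫ ^ 2 ∂(sphereUniform d) = ‖g‖ ^ 2 / d := by
  rw [integral_inner_sq_of_isometry_invariant sphereUniform_map_linearIsometryEquiv
    ae_norm_eq_one_sphereUniform, finrank_euclideanSpace_fin]

end SphereUniform

theorem sq_le_of_abs_sub_le {a b c : ℝ} (h : |a - b| ≤ c) : a ^ 2 ≤ 2 * b ^ 2 + 2 * c ^ 2 := by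
  have hsq : (a - b) ^ 2 ≤ c ^ 2 := sq_le_sq' (abs_le.1 h).1 (abs_le.1 h).2
  nlinarith [sq_nonneg (a - 2 * b)]

theorem norm_sq_difference_quotient_smul_le {E : Type*} [NormedAddCommGroup E] [InnerProductSpace ℝ E]
    [CompleteSpace E] {F : E → ℝ} {L : ℝ} (hF : Differentiable ℝ F) (x : E)
    (hL : ∀ y, ‖gradient F y - gradient F x‖ ≤ L * ‖y - x‖) (k : ℝ) {μ : ℝ} (hμ : μ ≠ 0)
    {v : E} (hv : ‖v‖ = 1) :
    ‖((k / μ) * (F (x + μ • v) - F x)) • v‖ ^ 2 ≤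
      2 * k ^ 2 * ⟪gradient F x, v⟫ ^ 2 + k ^ 2 * L ^ 2 * μ ^ 2 / 2 := by
  have htaylor := abs_sub_sub_inner_gradient_le hF x hL (x + μ • v)
  rw [add_sub_cancel_left, real_inner_smul_right, norm_smul, hv, mul_one, Real.norm_eq_abs,
    sq_abs] at htaylor
  have hdiff_sq := sq_le_of_abs_sub_le htaylor
  rw [norm_smul, hv, mul_one, Real.norm_eq_abs, sq_abs, mul_pow, div_pow]
  calc k ^ 2 / μ ^ 2 * (F (x + μ • v) - F x) ^ 2
      ≤ k ^ 2 / μ ^ 2 * (2 * (μ * ⟪gradient F x, v⟫) ^ 2 + 2 * (L / 2 * μ ^ 2) ^ 2) := by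
        gcongr
    _ = 2 * k ^ 2 * ⟪gradient F x, v⟫ ^ 2 + k ^ 2 * L ^ 2 * μ ^ 2 / 2 := by
        field_simp

theorem zeroth_order_second_moment (d : ℕ) (hd : 0 < d)
    (F : EuclideanSpace ℝ (Fin d) → ℝ) (L μ : ℝ) (hμ : 0 < μ)
    (hdiff : Differentiable ℝ F)
    (hlip : ∀ a b, ‖gradient F a - gradient F b‖ ≤ L * ‖a - b‖)
    (x : EuclideanSpace ℝ (Fin d)) :
    ∫ v, ‖(((d : ℝ) / μ) * (F (x + μ • v) - F x)) • v‖ ^ 2 ∂(sphereUniform d) ≤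
      2 * d * ‖gradient F x‖ ^ 2 + μ ^ 2 * L ^ 2 * d ^ 2 / 2 := by
  have : NeZero d := ⟨hd.ne'⟩
  have hinner := (integrable_inner_sq ae_norm_eq_one_sphereUniform (gradient F x)).const_mul
    (2 * (d : ℝ) ^ 2)
  calc ∫ v, ‖(((d : ℝ) / μ) * (F (x + μ • v) - F x)) • v‖ ^ 2 ∂(sphereUniform d)
      ≤ ∫ v, (2 * (d : ℝ) ^ 2 * ⟪gradient F x, v⟫ ^ 2 + (d : ℝ) ^ 2 * L ^ 2 * μ ^ 2 / 2)
          ∂(sphereUniform d) := by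
        refine integral_mono_of_nonneg (.of_forall fun v => by positivity)
          (hinner.add (integrable_const _)) ?_
        filter_upwards [ae_norm_eq_one_sphereUniform] with v hv
        exact norm_sq_difference_quotient_smul_le hdiff x (fun y => hlip y x) d hμ.ne' hv
    _ = 2 * (d : ℝ) ^ 2 * (‖gradient F x‖ ^ 2 / d) + (d : ℝ) ^ 2 * L ^ 2 * μ ^ 2 / 2 := by
        rw [integral_add hinner (integrable_const _), integral_const_mul,
          integral_inner_sq_sphereUniform]
        simp
    _ = 2 * d * ‖gradient F x‖ ^ 2 + μ ^ 2 * L ^ 2 * d ^ 2 / 2 := by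
        field_simp
end
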